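/- Let d ≥ 2 and R ∈ ℕ₊, and let G be a digraph with maxdeg(G) ≤ d. Then there exists a 3R-sparse partition π of V(G) with |π| ≤ d^{6R}. -/

import Mathlib

open MeasureTheory
open scoped Classical ENNReal

namespace MTLLL

variable {V : Type*} {ι : Type*}

/-- The out-neighbourhood `Var(x)` of a vertex `x` in the digraph with edge relation `E`. -/
def Var (E : V → V → Prop) (x : V) : Set V := {y | E x y}

/-- The in-neighbourhood `Cl(x)`. -/
def Cl (E : V → V → Prop) (x : V) : Set V := {y | E y x}

/-- The neighbourhood `N(x) = Var(x) ∪ Cl(x)`. -/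
def Nbr (E : V → V → Prop) (x : V) : Set V := Var E x ∪ Cl E x

/-- The maximal vertex degree of a digraph, as an extended natural number. -/
noncomputable def maxdeg (E : V → V → Prop) : ℕ∞ := ⨆ x : V, (Nbr E x).encard

/-- The digraph `Rel(G)`: edges join vertices whose out-neighbourhoods intersect. -/
def Rel (E : V → V → Prop) (x y : V) : Prop := (Var E x ∩ Var E y).Nonempty

/-- A set is independent in a digraph if no edge other than a self-loop joins two of its
elements. -/
def Indep (E : V → V → Prop) (I : Set V) : Prop :=
  ∀ x ∈ I, ∀ y ∈ I, x ≠ y → ¬ E x y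

/-- `I` is a maximal independent subset of `X`. -/
def MaxIndepIn (E : V → V → Prop) (X I : Set V) : Prop :=
  I ⊆ X ∧ Indep E I ∧ ∀ J : Set V, I ⊆ J → J ⊆ X → Indep E J → J = I

/-- A local rule: for each vertex `x` a set of colourings of `Var(x)` by `b` colours,
imposing no restriction when `Var(x)` is empty. -/
structure LocalRule (E : V → V → Prop) (b : ℕ) where
  R : ∀ x : V, Set (Var E x → Fin b)
  isFull_of_empty : ∀ x : V, Var E x = ∅ → R x = Set.univ

/-- The complement rule `𝐑ᶜ(x)`. -/
def LocalRule.Rc {E : V → V → Prop} {b : ℕ} (R : LocalRule E b) (x : V) :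
    Set (Var E x → Fin b) := (R.R x)ᶜ

/-- A colouring satisfies the rule if at every vertex its restriction to `Var(x)` obeys
`𝐑(x)`. -/
def Satisfies (E : V → V → Prop) {b : ℕ} (R : LocalRule E b) (f : V → Fin b) : Prop :=
  ∀ x : V, (fun y : Var E x => f y.1) ∈ R.R x

/-- The bad set `B(f)` of clauses violated by `f`. -/
def bad (E : V → V → Prop) {b : ℕ} (R : LocalRule E b) (f : V → Fin b) : Set V :=
  {x : V | (fun y : Var E x => f y.1) ∈ R.Rc x}

/-- The symmetrisation of the digraph, with loops removed, as a simple graph;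
it is used to measure graph distances. -/
def toSG (E : V → V → Prop) : SimpleGraph V where
  Adj x y := x ≠ y ∧ (E x y ∨ E y x)
  symm := ⟨fun x y h => ⟨Ne.symm h.1, h.2.symm⟩⟩
  loopless := ⟨fun x h => h.1 rfl⟩

/-- The ball of radius `r` around `x` in graph distance (ignoring orientations). -/
def ball (E : V → V → Prop) (x : V) (r : ℕ) : Set V :=
  {y | ∃ p : (toSG E).Walk x y, p.length ≤ r}

/-- The class `subexp(R,ε,d)`: max degree at most `d` and balls of radius `3R` of size at
most `(1+ε)^R`. -/
def Subexp (E : V → V → Prop) (Rad d : ℕ) (ε : ℝ) : Prop :=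
  maxdeg E ≤ (d : ℕ∞) ∧
  ∀ x : V, (ball E x (3 * Rad)).Finite ∧ ((ball E x (3 * Rad)).ncard : ℝ) ≤ (1 + ε) ^ Rad

/-- A partition (encoded by the map sending a vertex to its part) is `r`-sparse if distinct
vertices in the same part are at graph distance greater than `2r`. -/
def Sparse (E : V → V → Prop) (part : V → ι) (r : ℕ) : Prop :=
  ∀ x y : V, part x = part y → x ≠ y → y ∉ ball E x (2 * r)

/-- An independence function: `I X` is always a maximal independent subset of `X`. -/
def IndepFun (E : V → V → Prop) (I : Set V → Set V) : Prop :=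
  ∀ X : Set V, MaxIndepIn E X (I X)

/-- `Var` of a set of vertices. -/
def VarSet (E : V → V → Prop) (A : Set V) : Set V := ⋃ x ∈ A, Var E x

/-- One run of the Moser–Tardos algorithm: `(mtAux j).1 = MT^j` and `(mtAux j).2 = h^{j+1}`. -/
noncomputable def mtAux (E : V → V → Prop) {b : ℕ} (R : LocalRule E b)
    (part : V → ι) (I : Set V → Set V) (rnd : ι × ℕ → Fin b) :
    ℕ → (V → Fin b) × (V → ℕ)
  | 0 => (fun x => rnd (part x, 0), fun _ => 1)
  | j + 1 =>
    let p := mtAux E R part I rnd j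
    (fun x => if x ∈ VarSet E (I (bad E R p.1)) then rnd (part x, p.2 x) else p.1 x,
     fun x => if x ∈ VarSet E (I (bad E R p.1)) then p.2 x + 1 else p.2 x)

/-- The colouring `MT^j` produced by the Moser–Tardos algorithm. -/
noncomputable def MT (E : V → V → Prop) {b : ℕ} (R : LocalRule E b)
    (part : V → ι) (I : Set V → Set V) (rnd : ι × ℕ → Fin b) (j : ℕ) : V → Fin b :=
  (mtAux E R part I rnd j).1

/-- The resampling counters `h^k`. -/
noncomputable def hres (E : V → V → Prop) {b : ℕ} (R : LocalRule E b)
    (part : V → ι) (I : Set V → Set V) (rnd : ι × ℕ → Fin b) : ℕ → V → ℕ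
  | 0 => fun _ => 0
  | j + 1 => (mtAux E R part I rnd j).2

/-- The total number `h^∞(x)` of resamplings at `x`. -/
noncomputable def hinf (E : V → V → Prop) {b : ℕ} (R : LocalRule E b)
    (part : V → ι) (I : Set V → Set V) (rnd : ι × ℕ → Fin b) (x : V) : ℕ∞ :=
  ⨆ k : ℕ, (hres E R part I rnd k x : ℕ∞)

/-- `μ` is the product over `ι × ℕ` of uniform measures on `Fin b`: it is a probability
measure giving each cylinder set its natural measure. -/
def IsUnifProduct {ι : Type*} (b : ℕ) (μ : Measure ((ι × ℕ) → Fin b)) : Prop :=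
  IsProbabilityMeasure μ ∧
  ∀ (s : Finset (ι × ℕ)) (g : (ι × ℕ) → Fin b),
    μ {rnd | ∀ p ∈ s, rnd p = g p} = (1 / (b : ℝ≥0∞)) ^ s.card

end MTLLL

/-! A vertex at distance `r + 1` from `x` has a neighbour at distance `r`, hence at most
`d - 1` neighbours at distance `r + 2`. So the sphere of radius `r + 1` has at most
`d (d - 1)^r` vertices and the closed ball of radius `k ≥ 3` at most
`1 + ∑_{i<k} d (d - 1)^i ≤ d^k`. The graph joining distinct vertices at distance at most
`k = 6R` therefore has degrees `< d^k`, and a greedy colouring along a well-order of the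
vertices colours it with `d^k` colours; its colour classes are `3R`-sparse. -/

namespace Set

lemma Finite.encard_biUnion_le_encard_mul {ι α : Type*} {t : Set ι} (ht : t.Finite)
    {s : ι → Set α} {m : ℕ∞} (hs : ∀ i ∈ t, (s i).encard ≤ m) :
    (⋃ i ∈ t, s i).encard ≤ t.encard * m := by
  lift t to Finset ι using ht
  simp only [Finset.mem_coe, encard_coe_eq_coe_finsetCard] at hs ⊢
  calc (⋃ i ∈ t, s i).encard ≤ ∑ i ∈ t, (s i).encard := t.set_encard_biUnion_le s
    _ ≤ t.card • m := Finset.sum_le_card_nsmul _ _ _ hs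
    _ = t.card * m := nsmul_eq_mul _ _

end Set

lemma Nat.one_add_sum_mul_sub_one_pow_le_pow {d k : ℕ} (hd : 2 ≤ d) (hk : 3 ≤ k) :
    1 + ∑ i ∈ Finset.range k, d * (d - 1) ^ i ≤ d ^ k := by
  obtain ⟨e, rfl⟩ : ∃ e, d = e + 2 := ⟨d - 2, by omega⟩
  rw [show e + 2 - 1 = e + 1 by omega]
  induction k, hk using Nat.le_induction with
  | base =>
    simp only [Finset.sum_range_succ, Finset.sum_range_zero]
    nlinarith
  | succ k hk ih =>
    obtain ⟨j, rfl⟩ : ∃ j, k = j + 1 := ⟨k - 1, by omega⟩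
    have hstep : (e + 2) * (e + 1) ^ (j + 1) ≤ (e + 1) * (e + 2) ^ (j + 1) := by
      calc (e + 2) * (e + 1) ^ (j + 1) = (e + 1) * ((e + 2) * (e + 1) ^ j) := by ring
        _ ≤ (e + 1) * ((e + 2) * (e + 2) ^ j) := by gcongr; omega
        _ = (e + 1) * (e + 2) ^ (j + 1) := by ring
    calc 1 + ∑ i ∈ Finset.range (j + 1 + 1), (e + 2) * (e + 1) ^ i
        = (1 + ∑ i ∈ Finset.range (j + 1), (e + 2) * (e + 1) ^ i)
            + (e + 2) * (e + 1) ^ (j + 1) := by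
          rw [Finset.sum_range_succ, add_assoc]
      _ ≤ (e + 2) ^ (j + 1) + (e + 1) * (e + 2) ^ (j + 1) := add_le_add ih hstep
      _ = (e + 2) ^ (j + 1 + 1) := by ring

namespace SimpleGraph

variable {V : Type*} {G : SimpleGraph V}

lemma exists_adj_edist_eq_of_edist_eq_succ {x y : V} {r : ℕ} (h : G.edist x y = (r + 1 : ℕ)) :
    ∃ z, G.Adj z y ∧ G.edist x z = r := by
  obtain ⟨p, hp⟩ := exists_walk_of_edist_eq_coe h
  rw [← p.reverse_reverse] at hp
  cases hq : p.reverse with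
  | nil => simp [hq] at hp
  | cons hadj q =>
    rename_i z
    rw [hq, Walk.length_reverse, Walk.length_cons, Nat.add_right_cancel_iff] at hp
    refine ⟨z, hadj.symm, le_antisymm (hp ▸ Walk.length_reverse q ▸ q.reverse.edist_le) ?_⟩
    have := G.edist_triangle (u := x) (v := z) (w := y)
    rw [h, edist_eq_one_iff_adj.2 hadj.symm] at this
    exact_mod_cast (ENat.add_le_add_iff_right ENat.one_ne_top).1 this

variable {d : ℕ}

lemma encard_neighborSet_sdiff_edist_eq_le (hG : ∀ v, (G.neighborSet v).encard ≤ d) {x z : V}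
    {r : ℕ} (hz : G.edist x z = (r + 1 : ℕ)) :
    (G.neighborSet z \ {y | G.edist x y = r}).encard ≤ (d - 1 : ℕ) := by
  obtain ⟨w, hwz, hw⟩ := exists_adj_edist_eq_of_edist_eq_succ hz
  calc (G.neighborSet z \ {y | G.edist x y = r}).encard
      ≤ (G.neighborSet z \ {w}).encard :=
        Set.encard_le_encard (Set.sdiff_subset_sdiff_right (by simpa using hw))
    _ = (G.neighborSet z).encard - 1 := Set.encard_sdiff_singleton_of_mem hwz.symm
    _ ≤ (d - 1 : ℕ) := by push_cast; exact tsub_le_tsub_right (hG z) 1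

lemma encard_setOf_edist_eq_succ_le (hG : ∀ v, (G.neighborSet v).encard ≤ d) (x : V) (r : ℕ) :
    {y | G.edist x y = (r + 1 : ℕ)}.encard ≤ (d * (d - 1) ^ r : ℕ) := by
  induction r with
  | zero =>
    have hx : {y | G.edist x y = (0 + 1 : ℕ)} ⊆ G.neighborSet x := fun y hy =>
      edist_eq_one_iff_adj.1 (by simpa using hy)
    simpa using (Set.encard_le_encard hx).trans (hG x)
  | succ r ih =>
    have hcover : {y | G.edist x y = (r + 1 + 1 : ℕ)} ⊆
        ⋃ z ∈ {y | G.edist x y = (r + 1 : ℕ)}, G.neighborSet z \ {y | G.edist x y = r} := by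
      intro y hy
      obtain ⟨z, hzy, hz⟩ := exists_adj_edist_eq_of_edist_eq_succ hy
      refine Set.mem_biUnion hz ⟨hzy, fun hyr : G.edist x y = r => ?_⟩
      rw [hy, Nat.cast_inj] at hyr
      omega
    calc _ ≤ _ := Set.encard_le_encard hcover
      _ ≤ {y | G.edist x y = (r + 1 : ℕ)}.encard * (d - 1 : ℕ) :=
        (Set.finite_of_encard_le_coe ih).encard_biUnion_le_encard_mul
          fun z hz => encard_neighborSet_sdiff_edist_eq_le hG hz
      _ ≤ (d * (d - 1) ^ r : ℕ) * (d - 1 : ℕ) := by gcongr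
      _ = (d * (d - 1) ^ (r + 1) : ℕ) := by push_cast; ring

lemma encard_setOf_edist_le_le (hG : ∀ v, (G.neighborSet v).encard ≤ d) (x : V) (r : ℕ) :
    {y | G.edist x y ≤ r}.encard ≤ (1 + ∑ i ∈ Finset.range r, d * (d - 1) ^ i : ℕ) := by
  induction r with
  | zero =>
    have hx : {y | G.edist x y ≤ (0 : ℕ)} ⊆ {x} := fun y hy => by simpa using hy
    refine (Set.encard_le_encard hx).trans ?_
    simp
  | succ r ih =>
    have hsplit : {y | G.edist x y ≤ (r + 1 : ℕ)} ⊆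
        {y | G.edist x y ≤ r} ∪ {y | G.edist x y = (r + 1 : ℕ)} := by
      intro y (hy : G.edist x y ≤ (r + 1 : ℕ))
      rcases hy.lt_or_eq with hlt | heq
      · exact Or.inl (by simpa [ENat.lt_add_one_iff] using hlt)
      · exact Or.inr heq
    calc _ ≤ _ := Set.encard_le_encard hsplit
      _ ≤ _ := Set.encard_union_le _ _
      _ ≤ _ := add_le_add ih (encard_setOf_edist_eq_succ_le hG x r)
      _ = _ := by rw [Finset.sum_range_succ]; push_cast; ring

theorem colorable_of_encard_neighborSet_lt {n : ℕ} (h : ∀ v, (G.neighborSet v).encard < n) :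
    G.Colorable n := by
  have hfree : ∀ (v : V) (c : ∀ u, WellOrderingRel u v → Fin n),
      ∃ a, ∀ u (hu : WellOrderingRel u v), G.Adj v u → c u hu ≠ a := by
    intro v c
    have : NeZero n := ⟨by rintro rfl; simpa using h v⟩
    let g u : Fin n := if hu : WellOrderingRel u v then c u hu else 0
    obtain ⟨a, ha⟩ : ∃ a, a ∉ g '' G.neighborSet v := by
      by_contra! hall
      have := (Set.encard_le_encard (s := Set.univ) fun a _ => hall a).trans
        (Set.encard_image_le _ _)
      simp only [Set.encard_univ, ENat.card_eq_coe_fintype_card, Fintype.card_fin] at this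
      exact (h v).not_ge this
    refine ⟨a, fun u hu hvu hua => ha ⟨u, hvu, ?_⟩⟩
    simpa [g, hu] using hua
  choose F hF using hfree
  let c : V → Fin n := IsWellFounded.wf.fix F
  have hlt : ∀ u v, WellOrderingRel u v → G.Adj v u → c u ≠ c v := fun u v huv hvu => by
    rw [show c v = _ from IsWellFounded.wf.fix_eq F v]
    exact hF v (fun u _ => c u) u huv hvu
  refine ⟨Coloring.mk c fun {v w} hvw => ?_⟩
  rcases trichotomous_of WellOrderingRel v w with h | rfl | h
  · exact hlt v w h hvw.symm
  · exact absurd hvw G.irrefl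
  · exact (hlt w v h hvw).symm

theorem colorable_fromRel_edist_le (hG : ∀ v, (G.neighborSet v).encard ≤ d) (hd : 2 ≤ d)
    {k : ℕ} (hk : 3 ≤ k) : (fromRel fun x y => G.edist x y ≤ k).Colorable (d ^ k) := by
  refine colorable_of_encard_neighborSet_lt fun v => ?_
  have hball : {y | G.edist v y ≤ k}.encard ≤ (d ^ k : ℕ) :=
    (encard_setOf_edist_le_le hG v k).trans
      (Nat.cast_le.2 (Nat.one_add_sum_mul_sub_one_pow_le_pow hd hk))
  have hsub : (fromRel fun x y => G.edist x y ≤ k).neighborSet v ⊂ {y | G.edist v y ≤ k} := by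
    refine (Set.ssubset_iff_of_subset fun y hy => ?_).2 ⟨v, by simp, fun hv => hv.1 rfl⟩
    obtain ⟨-, hvy | hyv⟩ := hy
    exacts [hvy, (edist_comm (G := G)).trans_le hyv]
  exact ((Set.finite_of_encard_le_coe hball).subset hsub.subset).encard_lt_encard hsub
    |>.trans_le hball

end SimpleGraph

namespace MTLLL

variable {V : Type*} {E : V → V → Prop}

lemma mem_ball_iff_edist_le {x y : V} {r : ℕ} :
    y ∈ ball E x r ↔ (toSG E).edist x y ≤ r := by
  refine ⟨fun ⟨p, hp⟩ => p.edist_le.trans (Nat.cast_le.2 hp), fun h => ?_⟩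
  obtain ⟨p, hp⟩ :=
    SimpleGraph.exists_walk_of_edist_ne_top (ne_top_of_le_ne_top (by simp) h)
  exact ⟨p, Nat.cast_le.1 (hp ▸ h)⟩

lemma encard_neighborSet_toSG_le_maxdeg (x : V) :
    ((toSG E).neighborSet x).encard ≤ maxdeg E :=
  (Set.encard_le_encard fun _ hy => hy.2).trans (le_iSup (fun x => (Nbr E x).encard) x)

end MTLLL

open SimpleGraph MTLLL in
theorem exists_sparse_partition_card_le_general
    {V : Type*} (E : V → V → Prop) (d Rad : ℕ) (hd : 2 ≤ d) (hRad : 0 < Rad)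
    (hdeg : maxdeg E ≤ (d : ℕ∞)) :
    ∃ (n : ℕ) (part : V → Fin n), n ≤ d ^ (6 * Rad) ∧ Sparse E part (3 * Rad) := by
  have hdegG v : ((toSG E).neighborSet v).encard ≤ d :=
    (encard_neighborSet_toSG_le_maxdeg v).trans hdeg
  obtain ⟨c⟩ := colorable_fromRel_edist_le hdegG hd (show 3 ≤ 2 * (3 * Rad) by omega)
  refine ⟨_, c, le_of_eq (by ring), fun x y hxy hne hy => c.valid ?_ hxy⟩
  exact (fromRel_adj _ x y).2 ⟨hne, Or.inl (mem_ball_iff_edist_le.1 hy)⟩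

open MTLLL in
/-- Remark 2.4(a): a digraph of maximal degree at most `d` admits a `3R`-sparse partition
with at most `d^{6R}` parts. -/
theorem exists_sparse_partition_card_le
    {V : Type*} [Nonempty V] (E : V → V → Prop) (d Rad : ℕ) (hd : 2 ≤ d) (hRad : 0 < Rad)
    (hdeg : maxdeg E ≤ (d : ℕ∞)) :
    ∃ (n : ℕ) (part : V → Fin n), n ≤ d ^ (6 * Rad) ∧ Sparse E part (3 * Rad) :=
  exists_sparse_partition_card_le_general E d Rad hd hRad hdeg
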